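/- The key identity for the estimator: with (θ^δ, λ^δ, u^δ) solving the 3×3 block system, it holds that ‖θ^δ‖_X = sup over nonzero v ∈ Y^δ of |(f − G u^δ)(v)| / ‖G' v‖_{(X̂^δ)'}. -/

import Mathlib

open NormedSpace RealInnerProductSpace

/-!
By the second block equation the residual `(f - G u^δ)(v)` is `(G' v)(θ^δ)`. Testing `G' v`
against `θ^δ ∈ X̂^δ` gives `|(G' v)(θ^δ)| ≤ ‖G' v‖_{(X̂^δ)'} ‖θ^δ‖`, so every quotient in the
supremum is at most `‖θ^δ‖`. The first block equation says that `G' λ^δ` acts on `X̂^δ` as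
`⟪θ^δ, ·⟫`, whose dual norm on `X̂^δ ∋ θ^δ` is `‖θ^δ‖` and whose value at `θ^δ` is `‖θ^δ‖²`;
hence `v = λ^δ` attains the bound.
-/

section DualNormOn

variable {X : Type*} [NormedAddCommGroup X] [NormedSpace ℝ X] (K : Submodule ℝ X)

/-- The norm `‖φ‖_{K'}` of the restriction of `φ` to `K`. -/
noncomputable def dualNormOn (φ : StrongDual ℝ X) : ℝ :=
  ⨆ w : {w : K // (w : X) ≠ 0}, |φ w| / ‖(w : X)‖

theorem dualNormOn_nonneg (φ : StrongDual ℝ X) : 0 ≤ dualNormOn K φ :=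
  Real.iSup_nonneg fun _ => by positivity

theorem bddAbove_range_abs_apply_div_norm (φ : StrongDual ℝ X) :
    BddAbove (Set.range fun w : {w : K // (w : X) ≠ 0} => |φ w| / ‖(w : X)‖) := by
  refine ⟨‖φ‖, ?_⟩
  rintro _ ⟨w, rfl⟩
  exact div_le_of_le_mul₀ (norm_nonneg _) (norm_nonneg _)
    (by simpa only [Real.norm_eq_abs] using φ.le_opNorm w)

theorem abs_apply_le_dualNormOn_mul (φ : StrongDual ℝ X) (w : K) :
    |φ w| ≤ dualNormOn K φ * ‖(w : X)‖ := by
  by_cases hw : (w : X) = 0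
  · simp [hw]
  · rw [← div_le_iff₀ (norm_pos_iff.mpr hw)]
    exact le_ciSup (bddAbove_range_abs_apply_div_norm K φ) ⟨w, hw⟩

theorem dualNormOn_congr {φ ψ : StrongDual ℝ X} (h : ∀ w : K, φ w = ψ w) :
    dualNormOn K φ = dualNormOn K ψ := by
  simp only [dualNormOn, h]

end DualNormOn

theorem dualNormOn_innerSL {X : Type*} [NormedAddCommGroup X] [InnerProductSpace ℝ X]
    (K : Submodule ℝ X) (θ : K) : dualNormOn K (innerSL ℝ (θ : X)) = ‖(θ : X)‖ := by
  refine le_antisymm (Real.iSup_le (fun w => ?_) (norm_nonneg _)) ?_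
  · rw [innerSL_apply_apply, div_le_iff₀ (norm_pos_iff.mpr w.2)]
    exact abs_real_inner_le_norm _ _
  · by_cases hθ : (θ : X) = 0
    · rw [hθ, norm_zero]
      exact dualNormOn_nonneg K _
    · have h := abs_apply_le_dualNormOn_mul K (innerSL ℝ (θ : X)) θ
      rw [innerSL_apply_apply, real_inner_self_eq_norm_sq, abs_of_nonneg (by positivity), sq] at h
      exact le_of_mul_le_mul_right h (norm_pos_iff.mpr hθ)

theorem norm_eq_iSup_abs_apply_div_dualNormOn {X Y : Type*}
    [NormedAddCommGroup X] [InnerProductSpace ℝ X] [NormedAddCommGroup Y] [NormedSpace ℝ Y]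
    (G : X →L[ℝ] StrongDual ℝ Y) (K : Submodule ℝ X) (V : Submodule ℝ Y)
    (θ : K) (lam : V)
    (hlam : ∀ τ : K, G τ lam = ⟪(θ : X), τ⟫) :
    ‖(θ : X)‖ =
      ⨆ v : {v : V // (v : Y) ≠ 0}, |G θ (v : V)| / dualNormOn K (G.flip v) := by
  have hterm : ∀ v : V, |G θ v| / dualNormOn K (G.flip v) ≤ ‖(θ : X)‖ := fun v =>
    div_le_of_le_mul₀ (dualNormOn_nonneg K _) (norm_nonneg _)
      (by simpa only [mul_comm, ContinuousLinearMap.flip_apply] using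
        abs_apply_le_dualNormOn_mul K (G.flip v) θ)
  refine le_antisymm ?_ (Real.iSup_le (fun v => hterm v) (norm_nonneg _))
  by_cases hθ : (θ : X) = 0
  · rw [hθ, norm_zero]
    exact Real.iSup_nonneg fun _ => div_nonneg (abs_nonneg _) (dualNormOn_nonneg K _)
  have hlam_norm : dualNormOn K (G.flip lam) = ‖(θ : X)‖ :=
    (dualNormOn_congr K hlam).trans (dualNormOn_innerSL K θ)
  have hθlam : G θ lam = ‖(θ : X)‖ ^ 2 := by rw [hlam θ, real_inner_self_eq_norm_sq]
  have hlam0 : (lam : Y) ≠ 0 := fun h => hθ (by simpa [h] using hθlam.symm)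
  have hbdd : BddAbove (Set.range fun v : {v : V // (v : Y) ≠ 0} =>
      |G θ (v : V)| / dualNormOn K (G.flip v)) :=
    ⟨‖(θ : X)‖, by rintro _ ⟨v, rfl⟩; exact hterm v⟩
  calc ‖(θ : X)‖ = |G θ lam| / dualNormOn K (G.flip lam) := by
        rw [hθlam, hlam_norm, abs_of_nonneg (by positivity), sq, mul_self_div_self]
    _ ≤ _ := le_ciSup hbdd ⟨lam, hlam0⟩

theorem estimator_identity_general
    {X Y : Type*}
    [NormedAddCommGroup X] [InnerProductSpace ℝ X]
    [NormedAddCommGroup Y] [InnerProductSpace ℝ Y]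
    (G : X →L[ℝ] StrongDual ℝ Y) (f : StrongDual ℝ Y)
    (Xd : Submodule ℝ X) (Yd : Submodule ℝ Y) (Xhat : Submodule ℝ X)
    (θd : Xhat) (lamd : Yd) (ud : Xd)
    -- the 3×3 block system
    (h1 : ∀ τ : Xhat, ⟪((θd : Xhat) : X), ((τ : Xhat) : X)⟫
        - G ((τ : Xhat) : X) ((lamd : Yd) : Y) = 0)
    (h2 : ∀ μ : Yd, -(G ((θd : Xhat) : X) ((μ : Yd) : Y))
        - G ((ud : Xd) : X) ((μ : Yd) : Y) = -(f ((μ : Yd) : Y))) :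
    ‖((θd : Xhat) : X)‖
      = ⨆ v : {v : Yd // (v : Y) ≠ 0},
          |f ((v : Yd) : Y) - G ((ud : Xd) : X) ((v : Yd) : Y)|
            / (⨆ w : {w : Xhat // (w : X) ≠ 0},
                |G ((w : Xhat) : X) ((v : Yd) : Y)| / ‖((w : Xhat) : X)‖) := by
  have hlam : ∀ τ : Xhat, G τ lamd = ⟪(θd : X), τ⟫ := fun τ => by linarith [h1 τ]
  have hres : ∀ v : Yd, f v - G ud v = G θd v := fun v => by linarith [h2 v]
  simp only [hres]
  exact norm_eq_iSup_abs_apply_div_dualNormOn G Xhat Yd θd lamd hlam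

/-- The key identity for the estimator:
`‖θ^δ‖_X = sup_{0≠v∈Y^δ} |(f − G u^δ)(v)| / ‖G' v‖_{(X̂^δ)'}`. -/
theorem estimator_identity
    {X Y : Type*}
    [NormedAddCommGroup X] [InnerProductSpace ℝ X] [CompleteSpace X]
    [NormedAddCommGroup Y] [InnerProductSpace ℝ Y] [CompleteSpace Y]
    (G : X →L[ℝ] StrongDual ℝ Y) (f : StrongDual ℝ Y)
    (Xd : Submodule ℝ X) (Yd : Submodule ℝ Y) (Xhat : Submodule ℝ X)
    [FiniteDimensional ℝ Xd] [FiniteDimensional ℝ Yd] [FiniteDimensional ℝ Xhat]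
    (hYdbot : Yd ≠ ⊥)
    (θd : Xhat) (lamd : Yd) (ud : Xd)
    -- the 3×3 block system
    (h1 : ∀ τ : Xhat, ⟪((θd : Xhat) : X), ((τ : Xhat) : X)⟫
        - G ((τ : Xhat) : X) ((lamd : Yd) : Y) = 0)
    (h2 : ∀ μ : Yd, -(G ((θd : Xhat) : X) ((μ : Yd) : Y))
        - G ((ud : Xd) : X) ((μ : Yd) : Y) = -(f ((μ : Yd) : Y)))
    (h3 : ∀ w : Xd, -(G ((w : Xd) : X) ((lamd : Yd) : Y)) = 0)
    -- injectivity of v ↦ (G'v)|_{X̂^δ} on Y^δ, so the discretized dual norm is a norm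
    (hinj : ∀ v : Yd, (v : Y) ≠ 0 → ∃ w : Xhat, G ((w : Xhat) : X) ((v : Yd) : Y) ≠ 0) :
    ‖((θd : Xhat) : X)‖
      = ⨆ v : {v : Yd // (v : Y) ≠ 0},
          |f ((v : Yd) : Y) - G ((ud : Xd) : X) ((v : Yd) : Y)|
            / (⨆ w : {w : Xhat // (w : X) ≠ 0},
                |G ((w : Xhat) : X) ((v : Yd) : Y)| / ‖((w : Xhat) : X)‖) :=
  estimator_identity_general G f Xd Yd Xhat θd lamd ud h1 h2
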